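/- arXiv:1807.00982 — 3 statements merged into one kernel-verified Lean document; each statement's English description precedes it below -/
import Mathlib

section
/- Let G be a group equipped with the subgroup topology determined by a neighbourhood family Σ. Then G with this topology is a topological group if and only if every right translation map r_t : G → G, r_t(g) = gt (t ∈ G), is continuous. -/
open TopologicalSpace
open scoped Topology Pointwise

/-- The collection of all left cosets `g • H` of members of a family of subgroups. -/
def leftCosets {G : Type*} [Group G] (Sig : Set (Subgroup G)) : Set (Set G) :=
  {s | ∃ g : G, ∃ H ∈ Sig, s = g • (H : Set G)}

/-- A neighbourhood family on a group `G`: a (nonempty) collection of subgroups such that any two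
members contain a common member. -/
def IsNbhdFamily {G : Type*} [Group G] (Sig : Set (Subgroup G)) : Prop :=
  Sig.Nonempty ∧ ∀ H ∈ Sig, ∀ K ∈ Sig, ∃ S ∈ Sig, S ≤ H ⊓ K

/-- The subgroup topology on `G` determined by the family `Sig`: the topology generated by all
left cosets of members of `Sig`. -/
def subgroupTopology {G : Type*} [Group G] (Sig : Set (Subgroup G)) : TopologicalSpace G :=
  generateFrom (leftCosets Sig)

/-!
Continuity into a topology generated by cosets only has to be checked on the cosets `g • H`.
Inversion pulls `g • H` back to `{x | x * g ∈ H}`, open since right translation by `g` is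
continuous; multiplication pulls it back to a union of boxes built from right translates and
cosets.
-/

section Cosets

variable {G : Type*} [Group G]

lemma inv_preimage_smul_subgroup (g : G) (H : Subgroup G) :
    (fun x : G => x⁻¹) ⁻¹' (g • (H : Set G)) = (fun x : G => x * g) ⁻¹' (H : Set G) := by
  ext x
  simp only [Set.mem_preimage, mem_leftCoset_iff, SetLike.mem_coe]
  rw [← H.inv_mem_iff]
  simp only [mul_inv_rev, inv_inv]

lemma mul_mem_smul_subgroup {H : Subgroup G} {g x y : G} (hx : x ∈ g • (H : Set G))
    (hy : y ∈ H) : x * y ∈ g • (H : Set G) := by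
  rw [mem_leftCoset_iff] at hx ⊢
  rw [← mul_assoc]
  exact H.mul_mem hx hy

variable [TopologicalSpace G]

/-- Near `(a, b)` with `a * b ∈ g • H`, the product stays in `g • H` on the open box
`{z | z * b ∈ g • H} × b • H`, because `z * w = (z * b) * (b⁻¹ * w)`. -/
lemma isOpen_mul_preimage_smul_subgroup (hr : ∀ t : G, Continuous (fun g : G => g * t))
    {H : Subgroup G} (hH : ∀ g : G, IsOpen (g • (H : Set G))) (g : G) :
    IsOpen ((fun p : G × G => p.1 * p.2) ⁻¹' (g • (H : Set G))) := by
  rw [isOpen_prod_iff]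
  intro a b hab
  refine ⟨(fun z : G => z * b) ⁻¹' (g • (H : Set G)), b • (H : Set G),
    (hr b).isOpen_preimage _ (hH g), hH b, hab, ⟨1, H.one_mem, mul_one b⟩, ?_⟩
  rintro ⟨z, w⟩ ⟨hz, hw⟩
  have hbw : b⁻¹ * w ∈ H := mem_leftCoset_iff b |>.mp hw
  simpa only [Set.mem_preimage, mul_assoc, mul_inv_cancel_left] using
    mul_mem_smul_subgroup (H := H) hz hbw

end Cosets

lemma isOpen_smul_subgroup_of_mem {G : Type*} [Group G] {Sig : Set (Subgroup G)}
    {H : Subgroup G} (hH : H ∈ Sig) (g : G) : IsOpen[subgroupTopology Sig] (g • (H : Set G)) :=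
  isOpen_generateFrom_of_mem ⟨g, H, hH, rfl⟩

lemma isOpen_subgroup_of_mem {G : Type*} [Group G] {Sig : Set (Subgroup G)} {H : Subgroup G}
    (hH : H ∈ Sig) : IsOpen[subgroupTopology Sig] (H : Set G) := by
  simpa using isOpen_smul_subgroup_of_mem hH 1

theorem statement6_general {G : Type*} [Group G] (Sig : Set (Subgroup G)) :
    @IsTopologicalGroup G (subgroupTopology Sig) _ ↔
      ∀ t : G, Continuous[subgroupTopology Sig, subgroupTopology Sig] (fun g : G => g * t) := by
  let _ := subgroupTopology Sig
  refine ⟨fun _ t => continuous_mul_const t, fun hr => ?_⟩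
  refine { continuous_mul := ?_, continuous_inv := ?_ }
  · refine continuous_generateFrom_iff.mpr ?_
    rintro s ⟨g, H, hH, rfl⟩
    exact isOpen_mul_preimage_smul_subgroup hr (isOpen_smul_subgroup_of_mem hH) g
  · refine continuous_generateFrom_iff.mpr ?_
    rintro s ⟨g, H, hH, rfl⟩
    rw [inv_preimage_smul_subgroup]
    exact (hr g).isOpen_preimage _ (isOpen_subgroup_of_mem hH)

/-- `G` with the subgroup topology is a topological group iff every right
translation map `g ↦ g * t` is continuous. -/
theorem statement6 {G : Type*} [Group G] (Sig : Set (Subgroup G)) (hSig : IsNbhdFamily Sig) :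
    @IsTopologicalGroup G (subgroupTopology Sig) _ ↔
      ∀ t : G, Continuous[subgroupTopology Sig, subgroupTopology Sig] (fun g : G => g * t) :=
  statement6_general Sig
end

section
/- Let G be a group equipped with the subgroup topology determined by a neighbourhood family Σ, with infinitesimal subgroup S_Σ. The following are equivalent: (1) S_Σ is an open subgroup of G; (2) every closed subgroup of G is an open subgroup; (3) a subgroup of G is open if and only if it is closed; (4) a subgroup H of G is open if and only if S_Σ ⊆ H. -/
open TopologicalSpace
open scoped Topology Pointwise

open Set

section aux
variable {G : Type*} [Group G] {Sig : Set (Subgroup G)}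

lemma smul_coset_eq {H : Subgroup G} {g x : G} (hx : x ∈ g • (H : Set G)) :
    x • (H : Set G) = g • (H : Set G) := by
  obtain ⟨h, hh, rfl⟩ := hx
  show (g * h) • (H : Set G) = _
  rw [mul_smul, smul_coe_set hh]

lemma nbhd_basis (hSig : IsNbhdFamily Sig) :
    @IsTopologicalBasis G (subgroupTopology Sig) (leftCosets Sig) := by
  letI := subgroupTopology Sig
  refine ⟨?_, ?_, rfl⟩
  · rintro t₁ ⟨g, H, hH, rfl⟩ t₂ ⟨k, K, hK, rfl⟩ x ⟨hx₁, hx₂⟩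
    obtain ⟨S, hS, hSle⟩ := hSig.2 H hH K hK
    refine ⟨x • (S : Set G), ⟨x, S, hS, rfl⟩, ⟨1, S.one_mem, by simp⟩, ?_⟩
    rw [← smul_coset_eq hx₁, ← smul_coset_eq hx₂]
    rintro y ⟨s, hs, rfl⟩
    exact ⟨⟨s, (hSle hs).1, rfl⟩, ⟨s, (hSle hs).2, rfl⟩⟩
  · obtain ⟨H, hH⟩ := hSig.1
    refine eq_univ_of_forall fun x => ⟨x • (H : Set G), ⟨x, H, hH, rfl⟩, 1, H.one_mem, by simp⟩
end aux

section aux2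
variable {G : Type*} [Group G] {Sig : Set (Subgroup G)}

/-- A coset of a subgroup containing a member of `Sig` is open. -/
lemma coset_open_of_le {H : Subgroup G} (h : ∃ S ∈ Sig, S ≤ H) (g : G) :
    IsOpen[subgroupTopology Sig] (g • (H : Set G)) := by
  letI := subgroupTopology Sig
  obtain ⟨S, hS, hle⟩ := h
  have : g • (H : Set G) = ⋃ x ∈ g • (H : Set G), x • (S : Set G) := by
    apply Set.Subset.antisymm
    · intro x hx
      exact Set.mem_biUnion hx ⟨1, S.one_mem, by simp⟩
    · intro y hy
      simp only [Set.mem_iUnion] at hy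
      obtain ⟨x, hx, s, hs, rfl⟩ := hy
      rw [← smul_coset_eq hx]
      exact ⟨s, hle hs, rfl⟩
  rw [this]
  exact isOpen_biUnion fun x _ => GenerateOpen.basic _ ⟨x, S, hS, rfl⟩

lemma open_iff_le (hSig : IsNbhdFamily Sig) (H : Subgroup G) :
    IsOpen[subgroupTopology Sig] (H : Set G) ↔ ∃ S ∈ Sig, S ≤ H := by
  letI := subgroupTopology Sig
  constructor
  · intro hO
    obtain ⟨t, ⟨g, S, hS, rfl⟩, h1, hsub⟩ :=
      (nbhd_basis hSig).exists_subset_of_mem_open (H.one_mem) hO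
    refine ⟨S, hS, fun s hs => ?_⟩
    have hgS : g • (S : Set G) = (S : Set G) := by
      have := smul_coset_eq (H := S) (g := g) (x := 1) h1
      rw [one_smul] at this
      exact this.symm
    exact hsub (by rw [hgS]; exact hs)
  · intro h
    have := coset_open_of_le h 1
    rwa [one_smul] at this

lemma closed_of_open (hSig : IsNbhdFamily Sig) (H : Subgroup G)
    (hO : IsOpen[subgroupTopology Sig] (H : Set G)) :
    IsClosed[subgroupTopology Sig] (H : Set G) := by
  letI := subgroupTopology Sig
  rw [open_iff_le hSig] at hO
  constructor
  have : (H : Set G)ᶜ = ⋃ x ∈ (H : Set G)ᶜ, x • (H : Set G) := by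
    apply Set.Subset.antisymm
    · intro x hx
      exact Set.mem_biUnion hx ⟨1, H.one_mem, by simp⟩
    · intro y hy
      simp only [Set.mem_iUnion] at hy
      obtain ⟨x, hx, h, hh, rfl⟩ := hy
      intro hmem
      exact hx (by simpa using H.mul_mem hmem (H.inv_mem hh))
  rw [this]
  exact isOpen_biUnion fun x _ => coset_open_of_le hO x

/-- Every closed subgroup contains the infinitesimal subgroup. -/
lemma sInf_le_of_closed (hSig : IsNbhdFamily Sig) (H : Subgroup G)
    (hC : IsClosed[subgroupTopology Sig] (H : Set G)) : sInf Sig ≤ H := by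
  letI := subgroupTopology Sig
  intro x hx
  show x ∈ (H : Set G)
  rw [← hC.closure_eq]
  rw [(nbhd_basis hSig).mem_closure_iff]
  rintro o ⟨g, S, hS, rfl⟩ hxo
  have hx' : x ∈ S := (Subgroup.mem_sInf.1 hx) S hS
  refine ⟨1, ?_, H.one_mem⟩
  rw [← smul_coset_eq hxo, smul_coe_set hx']
  exact S.one_mem
end aux2

/-- TFAE for a group with the subgroup topology determined by `Σ`:
(1) the infinitesimal subgroup `S_Σ` is open; (2) every closed subgroup is open;
(3) a subgroup is open iff it is closed; (4) a subgroup is open iff it contains `S_Σ`. -/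
theorem statement7 {G : Type*} [Group G] (Sig : Set (Subgroup G)) (hSig : IsNbhdFamily Sig) :
    letI : TopologicalSpace G := subgroupTopology Sig
    List.TFAE [
      IsOpen ((sInf Sig : Subgroup G) : Set G),
      ∀ H : Subgroup G, IsClosed (H : Set G) → IsOpen (H : Set G),
      ∀ H : Subgroup G, IsOpen (H : Set G) ↔ IsClosed (H : Set G),
      ∀ H : Subgroup G, IsOpen (H : Set G) ↔ sInf Sig ≤ H ] := by
  letI : TopologicalSpace G := subgroupTopology Sig
  tfae_have 1 → 4
  | h1 => by
    intro H
    obtain ⟨S, hS, hle⟩ := (open_iff_le hSig _).1 h1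
    constructor
    · intro hO
      obtain ⟨S', hS', hle'⟩ := (open_iff_le hSig _).1 hO
      exact le_trans (sInf_le hS') hle'
    · intro h
      exact (open_iff_le hSig _).2 ⟨S, hS, le_trans hle h⟩
  tfae_have 4 → 2
  | h4 => fun H hC => (h4 H).2 (sInf_le_of_closed hSig H hC)
  tfae_have 2 → 3
  | h2 => fun H => ⟨closed_of_open hSig H, h2 H⟩
  tfae_have 3 → 1
  | h3 => by
    refine (h3 _).2 ?_
    have : ((sInf Sig : Subgroup G) : Set G) = ⋂ S ∈ Sig, (S : Set G) := by
      simp [Subgroup.coe_sInf]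
    rw [this]
    exact isClosed_biInter fun S hS =>
      closed_of_open hSig S ((open_iff_le hSig S).2 ⟨S, hS, le_rfl⟩)
  tfae_finish
end

section
/- Let X be a topological space with basepoint x₀, and let 𝒰 = (U_α) and 𝒱 = (V_α) be two path open covers of (X,x₀). Then the family 𝒲 = (U_α ∩ V_α) is again a path open cover of (X,x₀), and the corresponding path Spanier subgroups satisfy π̃(𝒲,x₀) ⊆ π̃(𝒰,x₀) ∩ π̃(𝒱,x₀); consequently, the collection of all path Spanier subgroups of π₁(X,x₀) forms a neighbourhood family. -/
open TopologicalSpace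
open scoped Topology Pointwise

attribute [local instance] Path.Homotopic.setoid

variable {X : Type*} [TopologicalSpace X]

/-- The homotopy class of a loop, as an element of the fundamental group. -/
noncomputable def fgClass {x₀ : X} (γ : Path x₀ x₀) : FundamentalGroup X x₀ :=
  ⟦γ⟧

/-- An open cover of the space `X`. -/
def IsOpenCover (U : Set (Set X)) : Prop :=
  (∀ u ∈ U, IsOpen u) ∧ ⋃₀ U = Set.univ

/-- The Spanier subgroup `π(𝒰, x₀)` of the fundamental group determined by an open cover `𝒰`:
the subgroup generated by all classes `[α * β * α⁻¹]` with `α` a path starting at `x₀` and `β`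
a loop at `α(1)` lying in some member of `𝒰`. -/
noncomputable def spanierSubgroup (U : Set (Set X)) (x₀ : X) :
    Subgroup (FundamentalGroup X x₀) :=
  Subgroup.closure
    {g | ∃ (x : X) (α : Path x₀ x) (β : Path x x) (u : Set X), u ∈ U ∧ Set.range β ⊆ u ∧
      g = fgClass ((α.trans β).trans α.symm)}

/-- The collection of all Spanier subgroups of `π₁(X, x₀)`. -/
def spanierFamily (x₀ : X) : Set (Subgroup (FundamentalGroup X x₀)) :=
  {H | ∃ U : Set (Set X), IsOpenCover U ∧ H = spanierSubgroup U x₀}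

/-- A path open cover of `(X, x₀)`: a family of open sets `V x α`, indexed by the paths `α` in
`X` from `x₀` to `x`, with `α(1) ∈ V x α`. -/
def IsPathOpenCover (x₀ : X) (V : (x : X) → Path x₀ x → Set X) : Prop :=
  ∀ (x : X) (α : Path x₀ x), IsOpen (V x α) ∧ α 1 ∈ V x α

/-- The path Spanier subgroup `π̃(𝒱, x₀)` determined by a path open cover `𝒱`: the subgroup
generated by all classes `[α * β * α⁻¹]` with `α` a path starting at `x₀` and `β` a loop at
`α(1)` lying in `V_α`. -/
noncomputable def pathSpanierSubgroup (x₀ : X) (V : (x : X) → Path x₀ x → Set X) :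
    Subgroup (FundamentalGroup X x₀) :=
  Subgroup.closure
    {g | ∃ (x : X) (α : Path x₀ x) (β : Path x x), Set.range β ⊆ V x α ∧
      g = fgClass ((α.trans β).trans α.symm)}

/-- The collection of all path Spanier subgroups of `π₁(X, x₀)`. -/
def pathSpanierFamily (x₀ : X) : Set (Subgroup (FundamentalGroup X x₀)) :=
  {H | ∃ V : (x : X) → Path x₀ x → Set X, IsPathOpenCover x₀ V ∧ H = pathSpanierSubgroup x₀ V}

theorem IsPathOpenCover.inter {x₀ : X} {U V : (x : X) → Path x₀ x → Set X}
    (hU : IsPathOpenCover x₀ U) (hV : IsPathOpenCover x₀ V) :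
    IsPathOpenCover x₀ (fun x α => U x α ∩ V x α) :=
  fun x α => ⟨(hU x α).1.inter (hV x α).1, (hU x α).2, (hV x α).2⟩

theorem isPathOpenCover_univ (x₀ : X) : IsPathOpenCover x₀ (fun _ _ => Set.univ) :=
  fun _ _ => ⟨isOpen_univ, Set.mem_univ _⟩

theorem pathSpanierSubgroup_mono {x₀ : X} {U V : (x : X) → Path x₀ x → Set X}
    (hUV : ∀ x α, U x α ⊆ V x α) : pathSpanierSubgroup x₀ U ≤ pathSpanierSubgroup x₀ V :=
  Subgroup.closure_mono fun _ ⟨x, α, β, hβ, hg⟩ => ⟨x, α, β, hβ.trans (hUV x α), hg⟩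

theorem pathSpanierSubgroup_inter_le (x₀ : X) (U V : (x : X) → Path x₀ x → Set X) :
    pathSpanierSubgroup x₀ (fun x α => U x α ∩ V x α) ≤
      pathSpanierSubgroup x₀ U ⊓ pathSpanierSubgroup x₀ V :=
  le_inf (pathSpanierSubgroup_mono fun _ _ => Set.inter_subset_left)
    (pathSpanierSubgroup_mono fun _ _ => Set.inter_subset_right)

theorem isNbhdFamily_pathSpanierFamily (x₀ : X) : IsNbhdFamily (pathSpanierFamily x₀) := by
  refine ⟨⟨_, _, isPathOpenCover_univ x₀, rfl⟩, ?_⟩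
  rintro _ ⟨U, hU, rfl⟩ _ ⟨V, hV, rfl⟩
  exact ⟨_, ⟨_, hU.inter hV, rfl⟩, pathSpanierSubgroup_inter_le x₀ U V⟩

/-- the pointwise intersection of two path open covers is a path open cover whose
path Spanier subgroup is contained in the intersection of the two path Spanier subgroups;
consequently the collection of all path Spanier subgroups is a neighbourhood family. -/
theorem statement14 (x₀ : X) (U V : (x : X) → Path x₀ x → Set X)
    (hU : IsPathOpenCover x₀ U) (hV : IsPathOpenCover x₀ V) :
    IsPathOpenCover x₀ (fun x α => U x α ∩ V x α) ∧
    pathSpanierSubgroup x₀ (fun x α => U x α ∩ V x α) ≤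
      pathSpanierSubgroup x₀ U ⊓ pathSpanierSubgroup x₀ V ∧
    IsNbhdFamily (pathSpanierFamily x₀) :=
  ⟨hU.inter hV, pathSpanierSubgroup_inter_le x₀ U V, isNbhdFamily_pathSpanierFamily x₀⟩
end
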